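/- arXiv:1805.08971 — 4 statements merged into one kernel-verified Lean document; each statement's English description precedes it below -/
import Mathlib

section
/- Let w be a nonempty, non-alternating word over {+,-} that has equally many +'s and -'s and whose first and last letters are equal. Then the MAS decomposition of w contains at least one block of even length. -/
/-- A word over {+,-}, with `true` = + and `false` = -. -/
abbrev Word := List Bool

/-- A word is alternately signed if any two consecutive letters differ. -/
def AltSigned (w : Word) : Prop := w.Chain' (· ≠ ·)

/-- The MAS decomposition of `w`: nonempty alternately signed blocks, consecutive
blocks meeting at equal letters. -/
def IsMASDecomp (w : Word) (bs : List Word) : Prop :=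
  bs.flatten = w ∧
  (∀ b ∈ bs, b ≠ [] ∧ AltSigned b) ∧
  bs.Chain' (fun a b => a.getLast? = b.head?)

/-- Signed count difference. -/
def dW (b : Word) : ℤ := (b.count true : ℤ) - (b.count false : ℤ)

lemma dW_append (a b : Word) : dW (a ++ b) = dW a + dW b := by
  simp [dW, List.count_append]; ring

lemma alt_dW : ∀ (b : Word), AltSigned b →
    dW b = if Even b.length then 0 else (if b.head? = some true then 1 else -1)
  | [], _ => by simp [dW]
  | [a], _ => by cases a <;> simp [dW]
  | a :: c :: t, hb => by
      have hac : a ≠ c := hb.rel_head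
      have hct : AltSigned (c :: t) := hb.tail
      have ht : AltSigned t := hct.tail
      have hdt := alt_dW t ht
      have hdac : dW (a :: c :: t) = dW t := by
        cases a <;> cases c <;> simp_all [dW] <;> push_cast <;> ring
      rw [hdac, hdt]
      have hlen : (a :: c :: t).length = t.length + 2 := by simp
      by_cases he : Even t.length
      · simp [hlen, he, Nat.even_add]
      · have hne : t ≠ [] := by rintro rfl; simp at he
        match t, hne with
        | x :: t', _ =>
          have hcx : c ≠ x := hct.rel_head
          have hxa : x = a := by
            cases a <;> cases c <;> cases x <;> simp_all
          simp [hlen, he, Nat.even_add, hxa]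

lemma alt_head_eq_last : ∀ (b : Word), AltSigned b → ¬ Even b.length →
    b.head? = b.getLast?
  | [], _, ho => by simp at ho
  | [a], _, _ => by simp
  | a :: c :: t, hb, ho => by
      have hct : AltSigned (c :: t) := hb.tail
      have ht : AltSigned t := hct.tail
      have hot : ¬ Even t.length := by
        simp only [List.length_cons] at ho
        simpa [Nat.even_add] using ho
      have hne : t ≠ [] := by rintro rfl; simp at hot
      have hIH := alt_head_eq_last t ht hot
      match t, hne with
      | x :: t', _ =>
        have hcx : c ≠ x := hct.rel_head
        have hac : a ≠ c := hb.rel_head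
        have hxa : x = a := by cases a <;> cases c <;> cases x <;> simp_all
        rw [List.getLast?_cons_cons, List.getLast?_cons_cons, ← hIH, hxa]
        simp

lemma key (bs : List Word) (x : Bool)
    (h2 : ∀ b ∈ bs, b ≠ [] ∧ AltSigned b ∧ ¬ Even b.length)
    (hchain : bs.Chain' (fun a b => a.getLast? = b.head?))
    (hhead : ∀ b ∈ bs.head?, b.head? = some x) :
    dW bs.flatten = (if x then 1 else -1) * bs.length := by
  induction bs with
  | nil => simp [dW]
  | cons b rest IH =>
    obtain ⟨hbne, hbalt, hbodd⟩ := h2 b (by simp)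
    have hbh : b.head? = some x := hhead b (by simp)
    have hdb : dW b = if x then 1 else -1 := by
      rw [alt_dW b hbalt, if_neg hbodd, hbh]
      cases x <;> simp
    have hrest : dW rest.flatten = (if x then 1 else -1) * rest.length := by
      apply IH (fun c hc => h2 c (by simp [hc])) hchain.tail
      cases rest with
      | nil => simp
      | cons c rest' =>
        intro d hd
        simp only [Option.mem_def, List.head?_cons, Option.some.injEq] at hd
        subst hd
        have := hchain.rel_head
        rw [← this, ← alt_head_eq_last b hbalt hbodd, hbh]
    simp only [List.flatten_cons, dW_append, hdb, hrest, List.length_cons]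
    push_cast
    ring

/-- If `w` is nonempty, not alternately signed, has equally many +'s and -'s,
and its first and last letters are equal, then its MAS decomposition contains
at least one block of even length. -/
theorem mas_has_even_block (w : Word) (bs : List Word)
    (h : IsMASDecomp w bs) (hne : w ≠ []) (hna : ¬ AltSigned w)
    (hcount : w.count true = w.count false) (hfl : w.head? = w.getLast?) :
    ∃ b ∈ bs, Even b.length := by
  by_contra hc
  push_neg at hc
  obtain ⟨hflat, hblocks, hchain⟩ := h
  have hbsne : bs ≠ [] := by rintro rfl; exact hne hflat.symm
  match bs, hbsne with
  | b0 :: rest, _ =>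
    obtain ⟨hb0ne, hb0alt⟩ := hblocks b0 (by simp)
    obtain ⟨x, t0, rfl⟩ : ∃ x t0, b0 = x :: t0 := by
      cases b0 with
      | nil => exact absurd rfl hb0ne
      | cons a t => exact ⟨a, t, rfl⟩
    have hk := key ((x :: t0) :: rest) x
      (fun c hcmem => ⟨(hblocks c hcmem).1, (hblocks c hcmem).2, hc c hcmem⟩)
      hchain (by intro c hcm; simp at hcm; subst hcm; rfl)
    rw [hflat] at hk
    have hdw : dW w = 0 := by simp [dW, hcount]
    rw [hdw] at hk
    cases x <;> simp at hk <;> omega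
end

section
/- Let w be a word over {+,-} with equally many +'s and -'s whose first and last letters are equal and which is not alternately signed. Then the total number of blocks in the MAS decomposition of w is even. -/
private def dd (w : Word) : ℤ := (w.count true : ℤ) - (w.count false : ℤ)

private def chi (b : Bool) : ℤ := if b then 1 else -1

private def chiO : Option Bool → ℤ := fun o => o.elim 0 chi

private lemma dd_cons (a : Bool) (l : Word) : dd (a :: l) = chi a + dd l := by
  cases a <;> simp [dd, chi, List.count_cons] <;> ring

private lemma dd_append (x y : Word) : dd (x ++ y) = dd x + dd y := by
  simp [dd, List.count_append]; ring

private lemma lemA (b : Word) (h : AltSigned b) :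
    2 * dd b = chiO b.head? + chiO b.getLast? := by
  induction b with
  | nil => simp [dd, chiO]
  | cons a l ih =>
    cases l with
    | nil => cases a <;> simp [dd, chi, chiO]
    | cons c l' =>
      obtain ⟨hac, htl⟩ := List.isChain_cons_cons.mp h
      have := ih htl
      rw [List.getLast?_cons_cons, dd_cons]
      simp only [List.head?_cons] at this ⊢
      have hchi : chi a + chi c = 0 := by
        cases a <;> cases c <;> simp_all [chi]
      simp only [chiO, Option.elim] at this ⊢
      linarith

private def HH (bs : List Word) : ℤ := (bs.map (fun b => chiO b.head?)).sum

private lemma lemB (bs : List Word)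
    (hb : ∀ b ∈ bs, b ≠ [] ∧ AltSigned b)
    (hc : bs.Chain' (fun a b => a.getLast? = b.head?)) :
    2 * dd bs.flatten = 2 * HH bs - chiO bs.flatten.head? + chiO bs.flatten.getLast? := by
  induction bs with
  | nil => simp [dd, HH, chiO]
  | cons b rest ih =>
    obtain ⟨hbne, hbalt⟩ := hb b List.mem_cons_self
    have hrest : ∀ x ∈ rest, x ≠ [] ∧ AltSigned x := fun x hx => hb x (List.mem_cons_of_mem _ hx)
    have hcr := hc.tail
    cases rest with
    | nil =>
      simp only [List.flatten_cons, List.flatten_nil, List.append_nil, HH, List.map_cons,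
        List.map_nil, List.sum_cons, List.sum_nil, add_zero]
      have := lemA b hbalt
      omega
    | cons c rest' =>
      obtain ⟨hcne, _⟩ := hrest c List.mem_cons_self
      have hlink : b.getLast? = c.head? := (List.isChain_cons_cons.mp hc).1
      have hflne : (c :: rest').flatten ≠ [] := by
        simp only [List.flatten_cons]
        intro hcon
        exact hcne (List.append_eq_nil_iff.mp hcon).1
      have hhead : (c :: rest').flatten.head? = c.head? := by
        simp only [List.flatten_cons, List.head?_append]
        cases c with
        | nil => exact absurd rfl hcne
        | cons x xs => simp
      have ihv := ih hrest hcr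
      have hflat : (b :: c :: rest').flatten = b ++ (c :: rest').flatten := rfl
      rw [hflat, dd_append]
      have hh : (b ++ (c :: rest').flatten).head? = b.head? := by
        rw [List.head?_append]
        cases b with
        | nil => exact absurd rfl hbne
        | cons x xs => simp
      have hl : (b ++ (c :: rest').flatten).getLast? = (c :: rest').flatten.getLast? := by
        rw [List.getLast?_append]
        have hs : ((c :: rest').flatten.getLast?).isSome := List.getLast?_isSome.mpr hflne
        obtain ⟨y, hy⟩ := Option.isSome_iff_exists.mp hs
        rw [hy]; rfl
      rw [hh, hl]
      have hA := lemA b hbalt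
      have hHH : HH (b :: c :: rest') = chiO b.head? + HH (c :: rest') := by
        simp [HH]
      rw [hHH]
      rw [hhead, ← hlink] at ihv
      omega

private lemma lemC (bs : List Word) (hne : ∀ b ∈ bs, b ≠ []) (h0 : HH bs = 0) :
    Even bs.length := by
  have key : ∀ cs : List Word, (∀ b ∈ cs, b ≠ []) → Even (HH cs + cs.length) := by
    intro cs
    induction cs with
    | nil => simp [HH]
    | cons b rest ih =>
      intro hcs
      have hb := hcs b List.mem_cons_self
      have hr := ih (fun x hx => hcs x (List.mem_cons_of_mem _ hx))
      have : HH (b :: rest) = chiO b.head? + HH rest := by simp [HH]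
      rw [this]
      have hch : chiO b.head? = 1 ∨ chiO b.head? = -1 := by
        cases b with
        | nil => exact absurd rfl hb
        | cons x xs => cases x <;> simp [chiO, chi]
      simp only [List.length_cons]
      push_cast
      rcases hr with ⟨k, hk⟩
      rcases hch with h1 | h1 <;> rw [h1]
      · exact ⟨k + 1, by omega⟩
      · exact ⟨k, by omega⟩
  have := key bs hne
  rw [h0, zero_add] at this
  exact (Int.even_coe_nat _).mp this

/-- If `w` has equally many +'s and -'s, its first and last letters are equal,
and it is not alternately signed, then the total number of blocks in its MAS
decomposition is even. -/
theorem mas_num_blocks_even (w : Word) (bs : List Word)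
    (h : IsMASDecomp w bs) (hna : ¬ AltSigned w)
    (hcount : w.count true = w.count false) (hfl : w.head? = w.getLast?) :
    Even bs.length := by
  obtain ⟨hflat, hb, hc⟩ := h
  have hB := lemB bs hb hc
  rw [hflat] at hB
  have hd : dd w = 0 := by simp [dd, hcount]
  rw [hd, hfl] at hB
  have hH : HH bs = 0 := by omega
  exact lemC bs (fun b hbm => (hb b hbm).1) hH
end

section
/- Let w be a word over {+,-} with equally many +'s and -'s, whose first and last letters are equal and which is not alternately signed, with MAS decomposition w = w₁w₂⋯w_{2k}. Then in any oriented noncrossing perfect matching of w (each pair joins a + position to a - position), every pair joins two positions that both lie in odd-indexed MAS blocks or both lie in even-indexed MAS blocks. -/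
/-- `IsNCMatching n m` : `m` is a noncrossing perfect matching of the positions
`Fin n`. Each pair is recorded as `(p.1, p.2)` with `p.1 < p.2`; every position
lies in exactly one pair; and there are no crossing pairs `{a,c}`, `{b,d}` with
`a < b < c < d`. -/
def IsNCMatching (n : ℕ) (m : Finset (Fin n × Fin n)) : Prop :=
  (∀ p ∈ m, p.1 < p.2) ∧
  (∀ i : Fin n, ∃! p : Fin n × Fin n, p ∈ m ∧ (p.1 = i ∨ p.2 = i)) ∧
  (∀ p ∈ m, ∀ q ∈ m, ¬ (p.1 < q.1 ∧ q.1 < p.2 ∧ p.2 < q.2))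

/-- A matching of the positions of a word `w` over {+,-} (`true` = +) is
oriented if every pair consists of one + position and one - position. -/
def IsOriented (w : List Bool) (m : Finset (Fin w.length × Fin w.length)) : Prop :=
  ∀ p ∈ m, w.get p.1 ≠ w.get p.2


/-- The index of the MAS block (in the decomposition `bs`) containing position
`i` of the word `bs.flatten`: the number of blocks whose cumulative length is at
most `i`. -/
def blockIdx (bs : List Word) (i : ℕ) : ℕ :=
  (List.range bs.length).countP fun j => ((bs.take (j + 1)).flatten).length ≤ i

lemma blockIdx_cons_lt (b : Word) (bs : List Word) (i : ℕ) (hi : i < b.length) :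
    blockIdx (b :: bs) i = 0 := by
  unfold blockIdx
  apply List.countP_eq_zero.mpr
  intro j hj
  simp only [List.take_succ_cons, List.flatten_cons, List.length_append, decide_eq_true_eq]
  omega

lemma blockIdx_cons_ge (b : Word) (bs : List Word) (i : ℕ) (hi : b.length ≤ i) :
    blockIdx (b :: bs) i = blockIdx bs (i - b.length) + 1 := by
  unfold blockIdx
  rw [List.length_cons, List.range_succ_eq_map, List.countP_cons, List.countP_map]
  have hc : List.countP ((fun j => decide ((List.take (j + 1) (b :: bs)).flatten.length ≤ i)) ∘ Nat.succ) (List.range bs.length)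
      = List.countP (fun j => decide ((List.take (j + 1) bs).flatten.length ≤ i - b.length)) (List.range bs.length) := by
    apply List.countP_congr; intro j hj
    simp only [Function.comp_apply, Nat.succ_eq_add_one, List.take_succ_cons, List.flatten_cons,
      List.length_append, decide_eq_true_eq]
    omega
  rw [hc]
  simp [hi]

lemma altSigned_get_iff (b : Word) (hb : AltSigned b) (i : ℕ) (hi : i < b.length) (h0 : 0 < b.length) :
    (b.get ⟨i, hi⟩ = b.get ⟨0, h0⟩) ↔ i % 2 = 0 := by
  induction i with
  | zero => simp
  | succ k ih =>
    have hk : k < b.length := by omega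
    have hne : b.get ⟨k, hk⟩ ≠ b.get ⟨k + 1, hi⟩ := List.isChain_iff_getElem.mp hb k (by omega)
    have hek := ih hk
    rcases Nat.even_or_odd k with he | ho
    · have h1 : k % 2 = 0 := Nat.even_iff.mp he
      have h2 : (k+1) % 2 = 1 := by omega
      rw [h2]
      revert hne hek
      cases b.get ⟨k, hk⟩ <;> cases b.get ⟨k+1, hi⟩ <;> cases b.get ⟨0, h0⟩ <;> simp [h1]
    · have h1 : k % 2 = 1 := Nat.odd_iff.mp ho
      have h2 : (k+1) % 2 = 0 := by omega
      rw [h2]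
      revert hne hek
      cases b.get ⟨k, hk⟩ <;> cases b.get ⟨k+1, hi⟩ <;> cases b.get ⟨0, h0⟩ <;> simp [h1]

lemma mas_get_iff : ∀ (bs : List Word),
    (∀ b ∈ bs, b ≠ [] ∧ AltSigned b) →
    bs.Chain' (fun a b => a.getLast? = b.head?) →
    ∀ (i : ℕ) (hi : i < bs.flatten.length) (h0 : 0 < bs.flatten.length),
    (bs.flatten.get ⟨i, hi⟩ = bs.flatten.get ⟨0, h0⟩ ↔ (i + blockIdx bs i) % 2 = 0)
  | [], _, _, i, hi, h0 => by simp at hi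
  | b :: bs', hblocks, hch, i, hi, h0 => by
    obtain ⟨hbne, hbas⟩ := hblocks b (List.mem_cons_self)
    have hℓ : 0 < b.length := List.length_pos_iff.mpr hbne
    simp only [List.flatten_cons, List.get_eq_getElem] at hi h0 ⊢
    have hget0 : (b ++ bs'.flatten)[0]'h0 = b[0]'hℓ := List.getElem_append_left hℓ
    by_cases hcase : i < b.length
    · rw [blockIdx_cons_lt b bs' i hcase, hget0, List.getElem_append_left hcase]
      have := altSigned_get_iff b hbas i hcase hℓ
      simp only [List.get_eq_getElem] at this
      rw [this]; omega
    · push_neg at hcase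
      have hif : i - b.length < bs'.flatten.length := by
        rw [List.length_append] at hi; omega
      have hf0 : 0 < bs'.flatten.length := by omega
      rw [blockIdx_cons_ge b bs' i hcase, hget0,
        List.getElem_append_right hcase]
      -- bs' nonempty
      obtain ⟨b2, bs'', rfl⟩ : ∃ b2 bs'', bs' = b2 :: bs'' := by
        cases bs' with
        | nil => simp at hf0
        | cons x xs => exact ⟨x, xs, rfl⟩
      obtain ⟨hb2ne, _⟩ := hblocks b2 (by simp)
      have hb2ℓ : 0 < b2.length := List.length_pos_iff.mpr hb2ne
      have hrel : b.getLast? = b2.head? := (List.isChain_cons_cons.mp hch).1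
      have hd : (b2 :: bs'').flatten[0]'hf0 = b[b.length - 1]'(by omega) := by
        have h1 : b.getLast? = some (b[b.length - 1]'(by omega)) := by
          rw [List.getLast?_eq_getElem?, List.getElem?_eq_getElem (by omega)]
        have h2 : b2.head? = some (b2[0]'hb2ℓ) := by
          rw [List.head?_eq_getElem?, List.getElem?_eq_getElem hb2ℓ]
        have h3 : (b2 :: bs'').flatten[0]'hf0 = b2[0]'hb2ℓ := by
          simp only [List.flatten_cons]
          exact List.getElem_append_left hb2ℓ
        rw [h3]
        rw [hrel, h2] at h1
        exact Option.some_injective _ h1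
      have IH := mas_get_iff (b2 :: bs'') (fun x hx => hblocks x (List.mem_cons_of_mem _ hx))
        (List.isChain_cons_cons.mp hch).2 (i - b.length) hif hf0
      simp only [List.get_eq_getElem] at IH
      have hlast := altSigned_get_iff b hbas (b.length - 1) (by omega) hℓ
      simp only [List.get_eq_getElem] at hlast
      have hbool : ∀ x y z : Bool, (x = z) ↔ ((x = y) ↔ (y = z)) := by decide
      rw [hbool _ ((b2 :: bs'').flatten[0]'hf0) _, IH, hd, hlast]
      omega

lemma ncm_uniq {n : ℕ} {m : Finset (Fin n × Fin n)} (hm : IsNCMatching n m)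
    (x : Fin n) {r s : Fin n × Fin n} (hr : r ∈ m) (hs : s ∈ m)
    (hrx : r.1 = x ∨ r.2 = x) (hsx : s.1 = x ∨ s.2 = x) : r = s := by
  obtain ⟨p, _, hu⟩ := hm.2.1 x
  rw [hu r ⟨hr, hrx⟩, hu s ⟨hs, hsx⟩]

lemma ncm_closed_even {n : ℕ} {m : Finset (Fin n × Fin n)} (hm : IsNCMatching n m) :
    ∀ (g a b : ℕ), b - a ≤ g → b ≤ n →
    (∀ i : Fin n, a < (i : ℕ) → (i : ℕ) < b →
      ∃ q ∈ m, (q.1 = i ∨ q.2 = i) ∧ a < (q.1 : ℕ) ∧ (q.2 : ℕ) < b) →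
    (b - (a + 1)) % 2 = 0 := by
  intro g
  induction g with
  | zero => intro a b hg _ _; omega
  | succ g ih =>
    intro a b hg hbn hclosed
    by_cases htriv : b ≤ a + 1
    · omega
    · push_neg at htriv
      set i0 : Fin n := ⟨a + 1, by omega⟩ with hi0
      obtain ⟨q, hq, hqi, hq1, hq2⟩ := hclosed i0 (by simp [hi0]) (by simp [hi0]; omega)
      have hqlt : (q.1 : ℕ) < (q.2 : ℕ) := hm.1 q hq
      have hq1e : (q.1 : ℕ) = a + 1 := by
        rcases hqi with h | h
        · rw [h]
        · rw [h] at hqlt; simp [hi0] at hqlt; omega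
      set c : ℕ := (q.2 : ℕ) with hc
      have hac : a + 1 < c := by omega
      have hcb : c < b := hq2
      -- closedness of (a+1, c)
      have hcl1 : ∀ i : Fin n, a + 1 < (i : ℕ) → (i : ℕ) < c →
          ∃ r ∈ m, (r.1 = i ∨ r.2 = i) ∧ a + 1 < (r.1 : ℕ) ∧ (r.2 : ℕ) < c := by
        intro i h1 h2
        obtain ⟨r, hr, hri, hr1, hr2⟩ := hclosed i (by omega) (by omega)
        have hrq : (r.1 : ℕ) ≠ a + 1 := by
          intro he
          have : r = q := ncm_uniq hm q.1 hr hq (Or.inl (by ext; rw [he, hq1e])) (Or.inl rfl)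
          rcases hri with h | h
          · have hv := congrArg Fin.val h
            omega
          · have hv := congrArg Fin.val h
            rw [this] at hv
            omega
        refine ⟨r, hr, hri, by omega, ?_⟩
        rcases hri with h | h
        · -- r.1 = i
          by_contra hge
          push_neg at hge
          have hrc : (r.2 : ℕ) ≠ c := by
            intro he
            have : r = q := ncm_uniq hm q.2 hr hq (Or.inr (by ext; rw [he])) (Or.inr rfl)
            subst this; omega
          exact hm.2.2 q hq r hr ⟨by omega, by rw [h]; omega, by omega⟩
        · rw [h]; omega
      -- closedness of (c, b)
      have hcl2 : ∀ i : Fin n, c < (i : ℕ) → (i : ℕ) < b →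
          ∃ r ∈ m, (r.1 = i ∨ r.2 = i) ∧ c < (r.1 : ℕ) ∧ (r.2 : ℕ) < b := by
        intro i h1 h2
        obtain ⟨r, hr, hri, hr1, hr2⟩ := hclosed i (by omega) (by omega)
        refine ⟨r, hr, hri, ?_, hr2⟩
        have hri2 : (r.2 : ℕ) = (i : ℕ) ∨ (r.1 : ℕ) = (i : ℕ) := by
          rcases hri with h | h
          · right; rw [h]
          · left; rw [h]
        by_contra hge
        push_neg at hge
        have hrneq : r ≠ q := by
          intro he; subst he
          rcases hri with h | h
          · rw [← h] at h1; omega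
          · rw [← h] at h1; omega
        have hr1q1 : (r.1 : ℕ) ≠ a + 1 := by
          intro he
          exact hrneq (ncm_uniq hm q.1 hr hq (Or.inl (by ext; rw [he, hq1e])) (Or.inl rfl))
        have hr1c : (r.1 : ℕ) ≠ c := by
          intro he
          exact hrneq (ncm_uniq hm q.2 hr hq (Or.inl (by ext; rw [he])) (Or.inr rfl))
        -- so a+1 < r.1 < c and r.2 = i > c : crossing with q
        have hr2i : (r.2 : ℕ) = (i : ℕ) := by
          rcases hri2 with h | h
          · exact h
          · omega
        exact hm.2.2 q hq r hr ⟨by omega, by omega, by omega⟩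
      have e1 := ih (a + 1) c (by omega) (by omega) hcl1
      have e2 := ih c b (by omega) (by omega) hcl2
      omega

lemma ncm_pair_parity {n : ℕ} {m : Finset (Fin n × Fin n)} (hm : IsNCMatching n m) :
    ∀ p ∈ m, ((p.1 : ℕ) + (p.2 : ℕ)) % 2 = 1 := by
  intro p hp
  have hlt : (p.1 : ℕ) < (p.2 : ℕ) := hm.1 p hp
  have hclosed : ∀ i : Fin n, (p.1 : ℕ) < (i : ℕ) → (i : ℕ) < (p.2 : ℕ) →
      ∃ q ∈ m, (q.1 = i ∨ q.2 = i) ∧ (p.1 : ℕ) < (q.1 : ℕ) ∧ (q.2 : ℕ) < (p.2 : ℕ) := by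
    intro i h1 h2
    obtain ⟨r, ⟨hr, hri⟩, _⟩ := hm.2.1 i
    have hrlt : (r.1 : ℕ) < (r.2 : ℕ) := hm.1 r hr
    have hrnep : r ≠ p := by
      intro he; subst he
      rcases hri with h | h <;> have hv := congrArg Fin.val h <;> omega
    have hri' : (r.1 : ℕ) = (i : ℕ) ∨ (r.2 : ℕ) = (i : ℕ) := by
      rcases hri with h | h
      · left; rw [h]
      · right; rw [h]
    have h11 : (r.1 : ℕ) ≠ (p.1 : ℕ) := by
      intro he
      exact hrnep (ncm_uniq hm p.1 hr hp (Or.inl (by ext; rw [he])) (Or.inl rfl))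
    have h22 : (r.2 : ℕ) ≠ (p.2 : ℕ) := by
      intro he
      exact hrnep (ncm_uniq hm p.2 hr hp (Or.inr (by ext; rw [he])) (Or.inr rfl))
    refine ⟨r, hr, hri, ?_, ?_⟩
    · by_contra hle
      push_neg at hle
      have hr2i : (r.2 : ℕ) = (i : ℕ) := by omega
      exact hm.2.2 r hr p hp ⟨by omega, by omega, by omega⟩
    · by_contra hle
      push_neg at hle
      have hr1i : (r.1 : ℕ) = (i : ℕ) := by omega
      exact hm.2.2 p hp r hr ⟨by omega, by omega, by omega⟩
  have := ncm_closed_even hm n (p.1 : ℕ) (p.2 : ℕ) (by omega) (by omega) hclosed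
  omega


/-- Let `w` have equally many +'s and -'s, equal first and last letters, and not
be alternately signed, with MAS decomposition `bs` (which then has evenly many
blocks).  In any oriented noncrossing perfect matching of `w`, every pair joins
two positions lying in blocks of equal parity of index: both in odd-indexed
blocks or both in even-indexed blocks. -/
theorem oriented_ncm_respects_mas_parity (w : Word) (bs : List Word)
    (h : IsMASDecomp w bs) (hcount : w.count true = w.count false)
    (hfl : w.head? = w.getLast?) (hna : ¬ AltSigned w)
    (m : Finset (Fin w.length × Fin w.length))
    (hm : IsNCMatching w.length m) (ho : IsOriented w m) :
    ∀ p ∈ m, blockIdx bs (p.1 : ℕ) % 2 = blockIdx bs (p.2 : ℕ) % 2 := by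
  intro p hp
  obtain ⟨hflat, hblocks, hchain⟩ := h
  subst hflat
  have hlen0 : 0 < bs.flatten.length := p.1.pos
  have hA := mas_get_iff bs hblocks hchain (p.1 : ℕ) p.1.isLt hlen0
  have hB := mas_get_iff bs hblocks hchain (p.2 : ℕ) p.2.isLt hlen0
  simp only [Fin.eta] at hA hB
  have hne := ho p hp
  have hpar := ncm_pair_parity hm p hp
  have hb2 : (bs.flatten.get p.1 = bs.flatten.get ⟨0, hlen0⟩) ↔
      ¬ (bs.flatten.get p.2 = bs.flatten.get ⟨0, hlen0⟩) := by
    revert hne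
    cases bs.flatten.get p.1 <;> cases bs.flatten.get p.2 <;>
      cases bs.flatten.get ⟨0, hlen0⟩ <;> simp
  rw [hA, hB] at hb2
  omega
end

section
/- Let w be as above with MAS decomposition w = w₁⋯w_{2k}, and consider the odd-length MAS blocks listed in cyclic order around a circle. If the last letter of one odd-length block differs from the first letter of the next odd-length block (in cyclic order), then the number of even-length MAS blocks lying between them is odd; if these letters agree, the number of even-length blocks between them is even. -/
/-- The list of indices lying cyclically strictly between `i` and `j` in
`{0, …, n-1}` (going from `i` forwards, with wraparound). -/
def betweenCyc (n i j : ℕ) : List ℕ :=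
  if i < j then List.range' (i + 1) (j - i - 1)
  else List.range' (i + 1) (n - i - 1) ++ List.range j

lemma alt_last : ∀ (b : Word), b ≠ [] → AltSigned b →
    b.getLast? = some (b.headI ^^ decide (b.length % 2 = 0))
  | [x], _, _ => by simp
  | x :: y :: l, _, h => by
    have h1 : x ≠ y := (List.isChain_cons_cons.mp h).1
    have h2 : AltSigned (y :: l) := (List.isChain_cons_cons.mp h).2
    have ih := alt_last (y :: l) (by simp) h2
    have hy : y = !x := by revert h1; cases x <;> cases y <;> simp
    rw [List.getLast?_cons_cons, ih, hy]
    rcases Nat.mod_two_eq_zero_or_one l.length with hm | hm <;>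
      cases x <;> simp [List.length_cons, Nat.add_mod, hm]

lemma flatten_head' : ∀ (bs : List Word), bs ≠ [] → (∀ b ∈ bs, b ≠ []) →
    bs.flatten.head? = (bs.headI).head?
  | b :: rest, _, hne => by
    have hb : b ≠ [] := hne b (by simp)
    cases b with
    | nil => exact absurd rfl hb
    | cons x l => simp

lemma flatten_getLast' : ∀ (bs : List Word) (h : bs ≠ []), (∀ b ∈ bs, b ≠ []) →
    bs.flatten.getLast? = (bs.getLast h).getLast?
  | [b], _, hne => by simp
  | b :: c :: rest, _, hne => by
    have ih := flatten_getLast' (c :: rest) (by simp) (fun x hx => hne x (by simp [hx]))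
    have hcr : (c :: rest).flatten ≠ [] := by
      intro h0
      have : c = [] := by
        have := congrArg List.head? h0
        cases c with
        | nil => rfl
        | cons y t => simp at this
      exact hne c (by simp) this
    rw [show (b :: c :: rest).flatten = b ++ (c :: rest).flatten from rfl,
      List.getLast?_append, List.getLast_cons (by simp), ← ih,
      List.getLast?_eq_getLast hcr]
    rfl

/-- Let `w` have equally many +'s and -'s, equal first and last letters, and not
be alternately signed, with MAS decomposition `bs`.  Suppose blocks `i` and `j`
have odd length and every block cyclically strictly between them (from `i` to
`j`) has even length (so block `j` is the next odd-length block after block `i`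
in cyclic order).  Then the last letter of block `i` equals the first letter of
block `j` if and only if the number of even-length blocks between them is even. -/
theorem mas_cyclic_odd_blocks (w : Word) (bs : List Word)
    (h : IsMASDecomp w bs) (hcount : w.count true = w.count false)
    (hfl : w.head? = w.getLast?) (hna : ¬ AltSigned w)
    (i j : ℕ) (hi : i < bs.length) (hj : j < bs.length) (hij : i ≠ j)
    (hoi : Odd (bs.getD i []).length) (hoj : Odd (bs.getD j []).length)
    (hbet : ∀ t ∈ betweenCyc bs.length i j, Even (bs.getD t []).length) :
    ((bs.getD i []).getLast? = (bs.getD j []).head?) ↔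
      Even (betweenCyc bs.length i j).length := by
  obtain ⟨hflat, hblocks, hchain⟩ := h
  set n := bs.length with hn
  have hnbs : bs ≠ [] := by
    intro h0
    apply hna
    have : w = [] := by rw [← hflat, h0]; rfl
    rw [this]; exact List.isChain_nil
  have hn1 : 1 ≤ n := by
    cases bs with
    | nil => exact absurd rfl hnbs
    | cons a l => simp [hn]
  have hblk : ∀ t, t < n → bs.getD t [] ≠ [] ∧ AltSigned (bs.getD t []) := by
    intro t ht
    apply hblocks
    rw [List.getD_eq_getElem _ _ ht]
    exact List.getElem_mem ht
  set f : ℕ → Bool := fun t => (bs.getD t []).headI with hf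
  have hhead' : ∀ t, t < n → (bs.getD t []).head? = some (f t) := by
    intro t ht
    have := (hblk t ht).1
    cases hb : bs.getD t [] with
    | nil => exact absurd hb this
    | cons x l => simp only [hf]; rw [hb]; simp
  have hlast' : ∀ t, t < n → (bs.getD t []).getLast? =
      some (f t ^^ decide ((bs.getD t []).length % 2 = 0)) := by
    intro t ht
    exact alt_last _ (hblk t ht).1 (hblk t ht).2
  have hstepf : ∀ t, t + 1 < n →
      f (t + 1) = (f t ^^ decide ((bs.getD t []).length % 2 = 0)) := by
    intro t ht
    have hc := List.isChain_iff_getElem.mp hchain t (by omega)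
    have h1 : (bs.getD t []).getLast? = (bs.getD (t+1) []).head? := by
      rw [List.getD_eq_getElem _ _ (by omega), List.getD_eq_getElem _ _ ht]
      simpa using hc
    rw [hlast' t (by omega), hhead' (t+1) ht] at h1
    exact (Option.some.inj h1).symm
  -- wraparound
  have hwrap : f 0 = (f (n-1) ^^ decide ((bs.getD (n-1) []).length % 2 = 0)) := by
    have hw0 : w.head? = (bs.getD 0 []).head? := by
      rw [← hflat, flatten_head' bs hnbs (fun b hb => (hblocks b hb).1)]
      cases bs with
      | nil => exact absurd rfl hnbs
      | cons a l => rfl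
    have hwl : w.getLast? = (bs.getD (n-1) []).getLast? := by
      rw [← hflat, flatten_getLast' bs hnbs (fun b hb => (hblocks b hb).1)]
      congr 1
      rw [List.getLast_eq_getElem, List.getD_eq_getElem _ _ (by omega)]
    have := hfl
    rw [hw0, hwl, hhead' 0 (by omega), hlast' (n-1) (by omega)] at this
    exact Option.some.inj this
  -- key walking lemma
  have key : ∀ len a, a + len < n →
      (∀ t, a ≤ t → t < a + len → (bs.getD t []).length % 2 = 0) →
      f (a + len) = (f a ^^ decide (len % 2 = 1)) := by
    intro len
    induction len with
    | zero => intro a _ _; simp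
    | succ m ih =>
      intro a hlt hev
      have h1 : f (a + m + 1) = !(f (a + m)) := by
        rw [hstepf (a + m) (by omega), hev (a + m) (by omega) (by omega)]
        simp
      have h2 := ih a (by omega) (fun t h1 h2 => hev t h1 (by omega))
      have : a + (m + 1) = a + m + 1 := by omega
      rw [this, h1, h2]
      rcases Nat.mod_two_eq_zero_or_one m with hm | hm <;>
        cases f a <;> simp [Nat.add_mod, hm]
  have hoi' : (bs.getD i []).length % 2 = 1 := Nat.odd_iff.mp hoi
  rw [hlast' i hi, hhead' j hj, hoi']
  simp only [decide_eq_true_eq, Option.some.injEq]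
  rcases lt_or_gt_of_ne hij with hlt | hgt
  · -- i < j
    simp only [betweenCyc, if_pos hlt] at hbet ⊢
    have hb : ∀ t, i + 1 ≤ t → t < i + 1 + (j - i - 1) →
        (bs.getD t []).length % 2 = 0 := by
      intro t h1 h2
      exact Nat.even_iff.mp (hbet t (List.mem_range'_1.mpr ⟨h1, h2⟩))
    have e1 : f (i + 1) = f i := by
      rw [hstepf i (by omega), hoi']; simp
    have e2 := key (j - i - 1) (i + 1) (by omega) hb
    have hj' : i + 1 + (j - i - 1) = j := by omega
    rw [hj', e1] at e2
    rw [List.length_range', Nat.even_iff, e2]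
    rcases Nat.mod_two_eq_zero_or_one (j - i - 1) with hm | hm <;>
      cases f i <;> simp [hm]
  · -- j < i
    simp only [betweenCyc, if_neg (by omega : ¬ i < j)] at hbet ⊢
    have hb1 : ∀ t, i + 1 ≤ t → t < n → (bs.getD t []).length % 2 = 0 := by
      intro t h1 h2
      refine Nat.even_iff.mp (hbet t ?_)
      rw [List.mem_append, List.mem_range'_1]
      left; exact ⟨h1, by omega⟩
    have hb2 : ∀ t, 0 ≤ t → t < 0 + j → (bs.getD t []).length % 2 = 0 := by
      intro t _ h2
      refine Nat.even_iff.mp (hbet t ?_)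
      rw [List.mem_append, List.mem_range]
      right; omega
    have e4 := key j 0 (by omega) hb2
    rw [Nat.zero_add] at e4
    rw [List.length_append, List.length_range', List.length_range, Nat.even_iff]
    by_cases hi1 : i = n - 1
    · have fz : f 0 = f i := by
        rw [hwrap, ← hi1, hoi']; simp
      rw [e4, fz]
      have : n - i - 1 = 0 := by omega
      rw [this]
      rcases Nat.mod_two_eq_zero_or_one j with hm | hm <;>
        cases f i <;> simp [hm]
    · have hii : i + 1 < n := by omega
      have e1 : f (i + 1) = f i := by
        rw [hstepf i hii, hoi']; simp
      have e2 := key (n - i - 2) (i + 1)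
        (by omega) (fun t h1 h2 => hb1 t h1 (by omega))
      have hrw : i + 1 + (n - i - 2) = n - 1 := by omega
      rw [hrw, e1] at e2
      have e3 : f 0 = !(f (n - 1)) := by
        rw [hwrap, hb1 (n - 1) (by omega) (by omega)]; simp
      rw [e4, e3, e2]
      rcases Nat.mod_two_eq_zero_or_one (n - i - 2) with hm | hm <;>
        rcases Nat.mod_two_eq_zero_or_one j with hm2 | hm2 <;>
        cases f i <;> simp [hm, hm2] <;> omega
end
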